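/- Let α₀,α₁,α₂,α₃,α₄ be complex parameters with α₀ + α₁ + 2α₂ + α₃ + α₄ = 1, and let (y,z) be a solution of the Hamiltonian system (9) on an open set U ⊆ ℂ∖{0,1} with y(t) ≠ 0 for all t ∈ U. Then the pair (ỹ, z̃) := (y, z − α₄/y) is a solution of the Hamiltonian system (9) on U with parameters (α₀, α₁, α₂+α₄, α₃, −α₄). (Bäcklund transformation s₄.) -/

import Mathlib

/-!
The transformation fixes `y`, so the `y`-equation only needs the new vector field to agree with the
old one along `z̃ = z - α₄/y`, an identity of rational functions. Differentiating `z̃` gives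
`t(t-1) z̃' = t(t-1) z' + α₄ · t(t-1) y' / y²`; substituting both equations of (9), the `z`-equation
for the new parameters becomes a rational identity in `y, z, t`, valid modulo the relation
`α₀ + α₁ + 2α₂ + α₃ + α₄ = 1`.
-/

/-- `(y, z)` is a (differentiable) solution of the Hamiltonian system (9) with
parameters `(a0, a1, a2, a3, a4)` on the set `U`. -/
def IsHamSol (a0 a1 a2 a3 a4 : ℂ) (U : Set ℂ) (y z : ℂ → ℂ) : Prop :=
  ∀ t ∈ U, DifferentiableAt ℂ y t ∧ DifferentiableAt ℂ z t ∧
    t * (t - 1) * deriv y t =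
      2 * y t * (y t - 1) * (y t - t) * z t - (a0 - 1) * y t * (y t - 1)
        - a3 * y t * (y t - t) - a4 * (y t - 1) * (y t - t) ∧
    t * (t - 1) * deriv z t =
      -(y t * (y t - 1) + (y t - 1) * (y t - t) + y t * (y t - t)) * z t ^ 2
        + ((2 * y t - 1) * (a0 - 1) + (2 * y t - t) * a3 + (2 * y t - t - 1) * a4) * z t
        - (a1 + a2) * a2

def hamFieldY (a0 a3 a4 t y z : ℂ) : ℂ :=
  2 * y * (y - 1) * (y - t) * z - (a0 - 1) * y * (y - 1) - a3 * y * (y - t)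
    - a4 * (y - 1) * (y - t)

def hamFieldZ (a0 a1 a2 a3 a4 t y z : ℂ) : ℂ :=
  -(y * (y - 1) + (y - 1) * (y - t) + y * (y - t)) * z ^ 2
    + ((2 * y - 1) * (a0 - 1) + (2 * y - t) * a3 + (2 * y - t - 1) * a4) * z
    - (a1 + a2) * a2

theorem isHamSol_iff {a0 a1 a2 a3 a4 : ℂ} {U : Set ℂ} {y z : ℂ → ℂ} :
    IsHamSol a0 a1 a2 a3 a4 U y z ↔
      ∀ t ∈ U, DifferentiableAt ℂ y t ∧ DifferentiableAt ℂ z t ∧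
        t * (t - 1) * deriv y t = hamFieldY a0 a3 a4 t (y t) (z t) ∧
        t * (t - 1) * deriv z t = hamFieldZ a0 a1 a2 a3 a4 t (y t) (z t) :=
  Iff.rfl

theorem hamFieldY_backlund_s4 (a0 a3 a4 t : ℂ) {y : ℂ} (hy : y ≠ 0) (z : ℂ) :
    hamFieldY a0 a3 (-a4) t y (z - a4 / y) = hamFieldY a0 a3 a4 t y z := by
  unfold hamFieldY
  field_simp
  ring

theorem hamFieldZ_backlund_s4 {a0 a1 a2 a3 a4 : ℂ} (hsum : a0 + a1 + 2 * a2 + a3 + a4 = 1)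
    (t : ℂ) {y : ℂ} (hy : y ≠ 0) (z : ℂ) :
    hamFieldZ a0 a1 (a2 + a4) a3 (-a4) t y (z - a4 / y) =
      hamFieldZ a0 a1 a2 a3 a4 t y z + a4 * hamFieldY a0 a3 a4 t y z / y ^ 2 := by
  unfold hamFieldY hamFieldZ
  field_simp
  linear_combination -a4 * y ^ 2 * hsum

theorem HasDerivAt.sub_const_div {𝕜 : Type*} [NontriviallyNormedField 𝕜] {z y : 𝕜 → 𝕜}
    {z' y' t : 𝕜} (c : 𝕜) (hz : HasDerivAt z z' t) (hy : HasDerivAt y y' t) (hy0 : y t ≠ 0) :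
    HasDerivAt (fun s => z s - c / y s) (z' + c * y' / y t ^ 2) t :=
  (hz.sub ((hasDerivAt_const t c).div hy hy0)).congr_deriv (by ring)

theorem ham_backlund_s4_general (a0 a1 a2 a3 a4 : ℂ)
    (hsum : a0 + a1 + 2 * a2 + a3 + a4 = 1)
    (U : Set ℂ)
    (y z : ℂ → ℂ)
    (hyz : IsHamSol a0 a1 a2 a3 a4 U y z)
    (hy : ∀ t ∈ U, y t ≠ 0) :
    IsHamSol a0 a1 (a2 + a4) a3 (-a4) U
      y (fun t => z t - a4 / y t) := by
  rw [isHamSol_iff] at hyz ⊢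
  intro t ht
  obtain ⟨hdy, hdz, hy', hz'⟩ := hyz t ht
  have hw := hdz.hasDerivAt.sub_const_div a4 hdy.hasDerivAt (hy t ht)
  refine ⟨hdy, hw.differentiableAt, ?_, ?_⟩
  · rw [hy', hamFieldY_backlund_s4 _ _ _ _ (hy t ht)]
  · rw [hw.deriv, hamFieldZ_backlund_s4 hsum _ (hy t ht), ← hz', ← hy']
    ring

/-- **Bäcklund transformation s₄.** If `α₀ + α₁ + 2α₂ + α₃ + α₄ = 1` and `(y, z)` solves
the Hamiltonian system (9) on the open set `U ⊆ ℂ∖{0,1}` with `y` nowhere zero on `U`,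
then `(y, z - α₄/y)` solves system (9) on `U` with parameters
`(α₀, α₁, α₂+α₄, α₃, −α₄)`. -/
theorem ham_backlund_s4 (a0 a1 a2 a3 a4 : ℂ)
    (hsum : a0 + a1 + 2 * a2 + a3 + a4 = 1)
    (U : Set ℂ) (hU : IsOpen U) (hU01 : ∀ t ∈ U, t ≠ 0 ∧ t ≠ 1)
    (y z : ℂ → ℂ)
    (hyz : IsHamSol a0 a1 a2 a3 a4 U y z)
    (hy : ∀ t ∈ U, y t ≠ 0) :
    IsHamSol a0 a1 (a2 + a4) a3 (-a4) U
      y (fun t => z t - a4 / y t) :=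
  ham_backlund_s4_general a0 a1 a2 a3 a4 hsum U y z hyz hy
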